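/- arXiv:2103.14316 — 3 statements merged into one kernel-verified Lean document; each statement's English description precedes it below -/
import Mathlib

section
/- Let G be a finite group and N a normal subgroup of G. Define m(G) to be the largest integer m ≥ 5 such that G has a section isomorphic to the alternating group A_m (i.e., there exist subgroups K ⊴ H ≤ G with H/K ≅ A_m), and m(G) = 0 if no such section exists. Then m(G) = max(m(N), m(G/N)). -/
/-!
A section of `G` isomorphic to a simple group `S` is a subgroup `H ≤ G` mapping onto `S`.
Given `N ⊴ G`, the image of `N ∩ H` is normal in `S`, hence trivial or everything. If it is
everything, `N ∩ H ≤ N` already maps onto `S`; if it is trivial, the map factors through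
`H / (N ∩ H)`, which embeds in `G / N`. Conversely sections of a subgroup or of a quotient are
sections of `G`. Since `A_m` is simple for `m ≥ 5`, the sets of degrees `m` occurring in `G`,
in `N` and in `G / N` satisfy `D(G) = D(N) ∪ D(G / N)`, and these sets are bounded by `|G|`.
-/

open Function

/-- `mSec G` is the largest integer `m ≥ 5` such that `G` has a section `H/K`
isomorphic to the alternating group `A_m`, and `0` if no such section exists. -/
noncomputable def mSec (G : Type) [Group G] : ℕ :=
  sSup {m | 5 ≤ m ∧ ∃ (H : Subgroup G) (K : Subgroup H), ∃ hn : K.Normal,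
    Nonempty (letI := hn; (H ⧸ K) ≃* alternatingGroup (Fin m))}

def HasSection (G S : Type*) [Group G] [Group S] : Prop :=
  ∃ (H : Subgroup G) (φ : H →* S), Surjective φ

namespace HasSection

variable {G K S : Type*} [Group G] [Group K] [Group S]

theorem of_ker_le {H : Type*} [Group H] (ψ : H →* K) (φ : H →* S) (hφ : Surjective φ)
    (hker : ψ.ker ≤ φ.ker) : HasSection K S :=
  let e := (QuotientGroup.quotientKerEquivRange ψ).symm
  ⟨ψ.range, (QuotientGroup.lift ψ.ker φ hker).comp e.toMonoidHom,
    (QuotientGroup.lift_surjective_of_surjective _ φ hφ hker).comp e.surjective⟩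

theorem of_surjective (φ : G →* S) (hφ : Surjective φ) : HasSection G S :=
  of_ker_le (MonoidHom.id G) φ hφ (by simp)

theorem map_of_injective (h : HasSection G S) (f : G →* K) (hf : Injective f) :
    HasSection K S := by
  obtain ⟨H, φ, hφ⟩ := h
  refine of_ker_le (f.comp H.subtype) φ hφ ?_
  have hinj : Injective (f.comp H.subtype) := hf.comp H.subtype_injective
  rw [(MonoidHom.ker_eq_bot_iff _).mpr hinj]
  exact bot_le

theorem comap_of_surjective (h : HasSection K S) (f : G →* K) (hf : Surjective f) :
    HasSection G S := by
  obtain ⟨H, φ, hφ⟩ := h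
  exact ⟨H.comap f, φ.comp (f.subgroupComap H),
    hφ.comp (f.subgroupComap_surjective_of_surjective H hf)⟩

theorem normal_or_quotient [IsSimpleGroup S] (N : Subgroup G) [N.Normal]
    (h : HasSection G S) : HasSection N S ∨ HasSection (G ⧸ N) S := by
  obtain ⟨H, φ, hφ⟩ := h
  have hnormal : ((N.subgroupOf H).map φ).Normal := Subgroup.Normal.map inferInstance φ hφ
  rcases hnormal.eq_bot_or_eq_top with hbot | htop
  · right
    refine of_ker_le ((QuotientGroup.mk' N).comp H.subtype) φ hφ ?_
    rw [← MonoidHom.comap_ker, QuotientGroup.ker_mk']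
    exact (Subgroup.map_eq_bot_iff _).mp hbot
  · left
    have hsurj : Surjective (φ.comp (N.subgroupOf H).subtype) := by
      rw [← MonoidHom.range_eq_top, MonoidHom.range_comp, Subgroup.range_subtype, htop]
    refine (of_surjective _ hsurj).map_of_injective
      ((H.subtype.comp (N.subgroupOf H).subtype).codRestrict N fun x => x.2) ?_
    intro x y hxy
    have hval := congrArg Subtype.val hxy
    exact Subtype.ext (Subtype.ext hval)

theorem iff_normal_or_quotient [IsSimpleGroup S] (N : Subgroup G) [N.Normal] :
    HasSection G S ↔ HasSection N S ∨ HasSection (G ⧸ N) S :=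
  ⟨normal_or_quotient N, fun h => h.elim (·.map_of_injective N.subtype N.subtype_injective)
    (·.comap_of_surjective (QuotientGroup.mk' N) (QuotientGroup.mk'_surjective N))⟩

theorem card_le [Finite G] (h : HasSection G S) : Nat.card S ≤ Nat.card G := by
  obtain ⟨H, φ, hφ⟩ := h
  exact (Nat.card_le_card_of_surjective φ hφ).trans H.card_le_card_group

end HasSection

theorem le_nat_card_alternatingGroup_fin {m : ℕ} (hm : 3 ≤ m) :
    m ≤ Nat.card (alternatingGroup (Fin m)) := by
  have : Nontrivial (Fin m) := Fin.nontrivial_iff_two_le.mpr (by omega)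
  obtain ⟨k, rfl⟩ : ∃ k, m = k + 1 := ⟨m - 1, by omega⟩
  rw [nat_card_alternatingGroup, Nat.card_eq_fintype_card, Fintype.card_fin,
    Nat.le_div_iff_mul_le two_pos, Nat.factorial_succ]
  exact Nat.mul_le_mul_left _ ((show 2 ≤ k by omega).trans k.self_le_factorial)

def alternatingSectionDegrees (G : Type*) [Group G] : Set ℕ :=
  {m | 5 ≤ m ∧ HasSection G (alternatingGroup (Fin m))}

theorem mSec_eq_sSup (G : Type) [Group G] : mSec G = sSup (alternatingSectionDegrees G) := by
  unfold mSec alternatingSectionDegrees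
  congr 1
  ext m
  refine and_congr_right fun _ => ⟨?_, ?_⟩
  · rintro ⟨H, K, hK, ⟨e⟩⟩
    exact ⟨H, e.toMonoidHom.comp (QuotientGroup.mk' K),
      e.surjective.comp (QuotientGroup.mk'_surjective K)⟩
  · rintro ⟨H, φ, hφ⟩
    exact ⟨H, φ.ker, inferInstance, ⟨QuotientGroup.quotientKerEquivOfSurjective φ hφ⟩⟩

theorem bddAbove_alternatingSectionDegrees (G : Type*) [Group G] [Finite G] :
    BddAbove (alternatingSectionDegrees G) :=
  ⟨Nat.card G, fun _ ⟨h5, hm⟩ =>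
    (le_nat_card_alternatingGroup_fin (by omega)).trans hm.card_le⟩

theorem alternatingSectionDegrees_eq_union (G : Type*) [Group G] (N : Subgroup G) [N.Normal] :
    alternatingSectionDegrees G =
      alternatingSectionDegrees N ∪ alternatingSectionDegrees (G ⧸ N) := by
  ext m
  simp only [alternatingSectionDegrees, Set.mem_union, Set.mem_ofPred_eq, ← and_or_left]
  refine and_congr_right fun h5 => ?_
  have : IsSimpleGroup (alternatingGroup (Fin m)) := alternatingGroup.isSimpleGroup (by simpa)
  exact HasSection.iff_normal_or_quotient N

/-- For a finite group `G` and a normal subgroup `N`,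
`m(G) = max (m(N), m(G/N))`. -/
theorem mSec_eq_max (G : Type) [Group G] [Finite G] (N : Subgroup G) [N.Normal] :
    mSec G = max (mSec N) (mSec (G ⧸ N)) := by
  rw [mSec_eq_sSup, mSec_eq_sSup, mSec_eq_sSup, alternatingSectionDegrees_eq_union G N]
  exact csSup_union' (bddAbove_alternatingSectionDegrees N)
    (bddAbove_alternatingSectionDegrees (G ⧸ N))
end

section
/- Let K ≤ L ≤ H be finite groups with K normal in H, and let S ≤ H. Then π(|H : S|) \ π(H/K) = π(|L : L ∩ S|) \ π(H/K). -/
/-! Both `|H : S| · |S : S ∩ L|` and `|L : L ∩ S| · |H : L|` equal `|H : S ∩ L|`. The cofactors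
`|S : S ∩ L|` and `|H : L|` both divide `|H : K|`: the first because `|S : S ∩ L|` divides
`|S : S ∩ K| = |SK : K|`, the second because `K ≤ L`. Factors whose primes all divide `|H : K|`
do not change the set of prime divisors outside `π(H/K)`. -/

theorem Nat.primeFactors_mul_sdiff_of_dvd {a b n : ℕ} (ha : a ∣ n) (hn : n ≠ 0) :
    (a * b).primeFactors \ n.primeFactors = b.primeFactors \ n.primeFactors := by
  rcases eq_or_ne b 0 with rfl | hb
  · simp
  rw [Nat.primeFactors_mul (ne_zero_of_dvd_ne_zero hn ha) hb, Finset.union_sdiff_distrib,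
    Finset.sdiff_eq_empty_iff_subset.mpr (Nat.primeFactors_mono ha hn), Finset.empty_union]

namespace Subgroup

variable {G : Type*} [Group G]

theorem relIndex_mul_index_eq_relIndex_mul_index (S L : Subgroup G) :
    L.relIndex S * S.index = S.relIndex L * L.index := by
  rw [← inf_relIndex_right L S, ← inf_relIndex_right S L, relIndex_mul_index inf_le_right,
    relIndex_mul_index inf_le_right, inf_comm]

theorem relIndex_dvd_index_of_normal_of_le {K L : Subgroup G} [K.Normal] (hKL : K ≤ L)
    (S : Subgroup G) : L.relIndex S ∣ K.index :=
  (relIndex_dvd_of_le_left S hKL).trans (relIndex_dvd_index_of_normal K S)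

end Subgroup

/-- Let `K ≤ L ≤ H` with `K` normal in `H`, and let `S ≤ H`. Then
`π(|H : S|) \ π(H/K) = π(|L : L ∩ S|) \ π(H/K)`. -/
theorem primes_index_sdiff (H : Type) [Group H] [Finite H]
    (K L S : Subgroup H) [K.Normal] (hKL : K ≤ L) :
    S.index.primeFactors \ (Nat.card (H ⧸ K)).primeFactors =
      (S.relIndex L).primeFactors \ (Nat.card (H ⧸ K)).primeFactors := by
  have hK : K.index ≠ 0 := Subgroup.index_ne_zero_of_finite
  change S.index.primeFactors \ K.index.primeFactors =
    (S.relIndex L).primeFactors \ K.index.primeFactors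
  calc S.index.primeFactors \ K.index.primeFactors
      = (L.relIndex S * S.index).primeFactors \ K.index.primeFactors :=
        (Nat.primeFactors_mul_sdiff_of_dvd
          (Subgroup.relIndex_dvd_index_of_normal_of_le hKL S) hK).symm
    _ = (L.index * S.relIndex L).primeFactors \ K.index.primeFactors := by
        rw [Subgroup.relIndex_mul_index_eq_relIndex_mul_index, mul_comm]
    _ = (S.relIndex L).primeFactors \ K.index.primeFactors :=
        Nat.primeFactors_mul_sdiff_of_dvd (Subgroup.index_dvd_of_le hKL) hK
end

section
/- Let H be a finite solvable permutation group of odd order acting faithfully on a finite nonempty set Ω. Then there exists a nonempty subset Δ ⊆ Ω such that π(H) = π(|H : H_Δ|). -/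
/-!
A solvable group `G` of odd order acting on a finite set has a subset `Δ` whose setwise
stabilizer acts trivially (Gluck); for a faithful action `H_Δ = 1`, so `|H : H_Δ| = |H|`.

The proof is by induction on the number of points. An intransitive action is treated orbit by
orbit. For a faithful transitive action, `G` has a nontrivial abelian normal subgroup `N` of prime
exponent `p`. If `N` is not transitive, its orbits are blocks of odd size `b`: by induction pick a
set `S` of blocks and a subset `D` of one block, copy `D` into every block and replace the copy by
its complement in the blocks outside `S`. As `b` is odd, `|D| ≠ b - |D|`, so an element stabilizing
the result preserves `S`, hence fixes every block, hence every point. If `N` is transitive it is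
regular, so `Ω ≅ N` and the point stabilizer `G₀` acts on `N` by conjugation. By induction some
union `Δ` of pairs `{n, n⁻¹}` is stabilized in `G₀` only by elements fixing every pair, and adding
or removing the pair `{1}` makes `p ∤ |Δ|`. If `g = v h` (`v ∈ N`, `h ∈ G₀`) stabilizes `Δ`, then
comparing the products of the elements of `Δ` and of `g • Δ` gives `v ^ |Δ| = 1`, so `v = 1`; then
`h` fixes or inverts each element of `N`, so it centralizes or inverts all of `N`, and `h = 1` as
`|G|` is odd.
-/

open Pointwise

theorem Set.ncard_range_lt_of_not_injective {α β : Type*} [Finite α] {f : α → β}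
    (hf : ¬ f.Injective) : (Set.range f).ncard < Nat.card α := by
  rw [← Set.image_univ, ← Set.ncard_univ]
  exact (Set.ncard_image_le Set.finite_univ).lt_of_ne fun h ↦
    hf (Set.injOn_univ.mp ((Set.ncard_image_iff Set.finite_univ).mp h))

theorem Set.not_dvd_ncard_or_not_dvd_ncard_symmDiff_singleton {α : Type*} [Finite α] {p : ℕ}
    (hp : p.Prime) (s : Set α) (a : α) : ¬ p ∣ s.ncard ∨ ¬ p ∣ (symmDiff s {a}).ncard := by
  have hsucc : (symmDiff s {a}).ncard + 1 = s.ncard ∨ s.ncard + 1 = (symmDiff s {a}).ncard := by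
    by_cases ha : a ∈ s
    · have : symmDiff s {a} = s \ {a} := by
        ext x; simp only [Set.mem_symmDiff, Set.mem_sdiff, Set.mem_singleton_iff]; grind
      exact Or.inl (by rw [this, Set.ncard_sdiff_singleton_add_one ha])
    · have : symmDiff s {a} = insert a s := by
        ext x; simp only [Set.mem_symmDiff, Set.mem_insert_iff, Set.mem_singleton_iff]; grind
      exact Or.inr (by rw [this, Set.ncard_insert_of_notMem ha])
  by_contra! h
  have hp1 : p ∣ 1 := by
    rcases hsucc with hsucc | hsucc
    · exact (Nat.dvd_add_right h.2).mp (hsucc ▸ h.1)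
    · exact (Nat.dvd_add_right h.1).mp (hsucc ▸ h.2)
  exact hp.one_lt.ne' (Nat.dvd_one.mp hp1)

theorem eq_one_of_mul_self_eq_one {G : Type*} [Group G] (hodd : Odd (Nat.card G)) {g : G}
    (hg : g * g = 1) : g = 1 :=
  orderOf_eq_one_iff.mp <| ((Nat.coprime_two_left.mpr hodd).coprime_dvd_left
    (orderOf_dvd_of_pow_eq_one (by rwa [sq]))).eq_one_of_dvd (orderOf_dvd_natCard g)

theorem Finset.prod_eq_one_of_inv_mem {M : Type*} [CommGroup M] (hodd : Odd (Nat.card M))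
    {s : Finset M} (hs : ∀ x ∈ s, x⁻¹ ∈ s) : ∏ x ∈ s, x = 1 :=
  Finset.prod_involution (fun x _ ↦ x⁻¹) (fun x _ ↦ mul_inv_cancel x)
    (fun x _ hx hinv ↦
      hx (eq_one_of_mul_self_eq_one hodd (by simpa only [hinv] using mul_inv_cancel x)))
    hs (fun x _ ↦ inv_inv x)

theorem pow_card_eq_one_of_mapsTo {M : Type*} [CommGroup M] (φ : M ≃* M) (v : M)
    {s : Finset M} (hs : ∏ x ∈ s, x = 1) (hmaps : ∀ x ∈ s, v * φ x ∈ s) : v ^ s.card = 1 := by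
  classical
  have hinj : Function.Injective fun x ↦ v * φ x := (mul_right_injective v).comp φ.injective
  have himage : s.image (fun x ↦ v * φ x) = s :=
    Finset.eq_of_subset_of_card_le (Finset.image_subset_iff.mpr hmaps)
      (Finset.card_image_of_injective _ hinj).ge
  calc v ^ s.card = v ^ s.card * φ (∏ x ∈ s, x) := by rw [hs, map_one, mul_one]
    _ = ∏ x ∈ s, v * φ x := by rw [Finset.prod_mul_distrib, Finset.prod_const, map_prod]
    _ = ∏ x ∈ s.image (fun x ↦ v * φ x), x :=
      (Finset.prod_image (f := fun x ↦ x) hinj.injOn).symm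
    _ = 1 := by rw [himage, hs]

theorem MonoidHom.forall_eq_or_forall_eq_inv {M : Type*} [CommGroup M] (φ : M →* M)
    (h : ∀ x, φ x = x ∨ φ x = x⁻¹) : (∀ x, φ x = x) ∨ ∀ x, φ x = x⁻¹ := by
  have hcover : ((⊤ : Subgroup M) : Set M) ⊆
      (φ.eqLocus (MonoidHom.id M) : Set M) ∪ φ.eqLocus (invMonoidHom : M →* M) :=
    fun x _ ↦ h x
  rcases SubgroupClass.subset_union.mp hcover with h₁ | h₂
  · exact Or.inl fun x ↦ h₁ (Subgroup.mem_top x)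
  · exact Or.inr fun x ↦ h₂ (Subgroup.mem_top x)

namespace Subgroup

variable {G : Type*} [Group G]

def kerPow (A : Subgroup G) [IsMulCommutative A] (p : ℕ) : Subgroup G where
  carrier := {g | g ∈ A ∧ g ^ p = 1}
  one_mem' := ⟨A.one_mem, one_pow p⟩
  mul_mem' := fun ⟨ha, ha'⟩ ⟨hb, hb'⟩ ↦ ⟨A.mul_mem ha hb, by
    rw [Commute.mul_pow (setLike_mul_comm ha hb), ha', hb', one_mul]⟩
  inv_mem' := fun ⟨ha, ha'⟩ ↦ ⟨A.inv_mem ha, by rw [inv_pow, ha', inv_one]⟩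

variable (A : Subgroup G) [IsMulCommutative A] (p : ℕ)

instance kerPow_normal [A.Normal] : (A.kerPow p).Normal :=
  ⟨fun _ ⟨hn, hn'⟩ g ↦ ⟨Normal.conj_mem inferInstance _ hn g, by
    rw [conj_pow, hn', mul_one, mul_inv_cancel]⟩⟩

instance kerPow_isMulCommutative : IsMulCommutative (A.kerPow p) :=
  IsMulCommutative.of_comm fun a b ↦ Subtype.ext (setLike_mul_comm a.2.1 b.2.1)

theorem pow_eq_one_of_mem_kerPow (a : A.kerPow p) : a ^ p = 1 :=
  Subtype.ext a.2.2

theorem kerPow_ne_bot [Finite A] [Fact p.Prime] (hp : p ∣ Nat.card A) : A.kerPow p ≠ ⊥ := by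
  obtain ⟨a, ha⟩ := exists_prime_orderOf_dvd_card' p hp
  refine ne_bot_iff_exists_ne_one.mpr ⟨⟨a, a.2, ?_⟩, fun h ↦ ?_⟩
  · rw [← coe_pow, ← ha, pow_orderOf_eq_one, OneMemClass.coe_one]
  · have : (a : G) = 1 := congrArg Subtype.val h
    rw [OneMemClass.coe_eq_one] at this
    rw [this, orderOf_one] at ha
    exact (Fact.out : p.Prime).one_lt.ne ha

theorem exists_normal_isMulCommutative_ne_bot [Group.IsSolvable G] [Nontrivial G] :
    ∃ A : Subgroup G, A.Normal ∧ IsMulCommutative A ∧ A ≠ ⊥ := by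
  classical
  have hex : ∃ n, derivedSeries G (n + 1) = ⊥ := by
    obtain ⟨n, hn⟩ := Group.IsSolvable.solvable (G := G)
    exact ⟨n, eq_bot_iff.mpr (hn ▸ derivedSeries_antitone G n.le_succ)⟩
  refine ⟨derivedSeries G (Nat.find hex), derivedSeries_normal G _,
    IsMulCommutative.of_comm fun a b ↦ Subtype.ext ?_, ?_⟩
  · have := commutator_mem_commutator a.2 b.2
    rw [← derivedSeries_succ, Nat.find_spec hex, mem_bot] at this
    exact commutatorElement_eq_one_iff_mul_comm.mp this
  · cases hk : Nat.find hex with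
    | zero => rw [derivedSeries_zero]; exact top_ne_bot
    | succ m => exact Nat.find_min hex (hk ▸ m.lt_succ_self)

end Subgroup

namespace MulAction

section Distinguishing

variable {G X : Type*} [Group G] [MulAction G X]

theorem smul_range_eq_of_forall_smul {Y : Type*} [MulAction G Y] {f : X → Y}
    (hf : ∀ (g : G) x, f (g • x) = g • f x) (g : G) : g • Set.range f = Set.range f := by
  rw [Set.smul_set_range, ← (MulAction.surjective g).range_comp f]
  simp only [Function.comp_def, hf]

theorem preimage_smul_set_of_forall_smul {Y : Type*} [MulAction G Y] {f : X → Y}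
    (hf : ∀ (g : G) x, f (g • x) = g • f x) (g : G) (T : Set Y) :
    f ⁻¹' (g • T) = g • f ⁻¹' T := by
  ext x
  simp only [Set.mem_preimage, Set.mem_smul_set_iff_inv_smul_mem, hf]

variable (G) in
def IsDistinguishing (Δ : Set X) : Prop :=
  ∀ g : G, g • Δ = Δ → ∀ x : X, g • x = x

variable (G) in
def IsDistinguishingOn (s Δ : Set X) : Prop :=
  ∀ g : G, g • s = s → g • Δ = Δ → ∀ x ∈ s, g • x = x

theorem IsDistinguishing.compl {Δ : Set X} (hΔ : IsDistinguishing G Δ) :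
    IsDistinguishing G Δᶜ :=
  fun g hg ↦ hΔ g (compl_inj_iff.mp (by rw [← Set.smul_set_compl, hg]))

theorem IsDistinguishing.of_toPermHom_range {Δ : Set X}
    (hΔ : IsDistinguishing (toPermHom G X).range Δ) : IsDistinguishing G Δ :=
  fun g hg ↦ hΔ ⟨toPermHom G X g, g, rfl⟩ hg

theorem IsDistinguishingOn.smul {s Δ : Set X} (h : IsDistinguishingOn G s Δ) (t : G) :
    IsDistinguishingOn G (t • s) (t • Δ) := by
  intro g hgs hgΔ x hx
  have hconj : ∀ u : Set X, g • t • u = t • u → (t⁻¹ * g * t) • u = u := fun u hu ↦ by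
    rw [mul_smul, mul_smul, hu, inv_smul_smul]
  obtain ⟨y, hy, rfl⟩ := hx
  have := h _ (hconj s hgs) (hconj Δ hgΔ) y hy
  rwa [mul_smul, mul_smul, inv_smul_eq_iff] at this

theorem isDistinguishing_union {s Δ₁ Δ₂ : Set X} (hs : ∀ g : G, g • s = s)
    (h₁ : Δ₁ ⊆ s) (h₂ : Δ₂ ⊆ sᶜ) (hΔ₁ : IsDistinguishingOn G s Δ₁)
    (hΔ₂ : IsDistinguishingOn G sᶜ Δ₂) : IsDistinguishing G (Δ₁ ∪ Δ₂) := by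
  intro g hg x
  have hsc : g • sᶜ = sᶜ := by rw [Set.smul_set_compl, hs]
  have hpart : ∀ {t Δ : Set X}, g • t = t → (Δ₁ ∪ Δ₂) ∩ t = Δ → g • Δ = Δ := by
    rintro t Δ ht rfl
    rw [Set.smul_set_inter, hg, ht]
  by_cases hx : x ∈ s
  · exact hΔ₁ g (hs g) (hpart (hs g) (by grind)) x hx
  · exact hΔ₂ g hsc (hpart hsc (by grind)) x hx

end Distinguishing

section Blocks

variable {G X : Type*} [Group G] [MulAction G X] {N : Subgroup G} {S : Set (Set X)}
  {T : Set X → Set X}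

/-- On a block `β ∈ S` this is `T β`, on any other block the complement of `T β` in `β`. -/
def blockSet (N : Subgroup G) (S : Set (Set X)) (T : Set X → Set X) : Set X :=
  {x | orbit N x ∈ S ↔ x ∈ T (orbit N x)}

open Classical in
theorem blockSet_inter_orbit (hT : ∀ y, T (orbit N y) ⊆ orbit N y) (y : X) :
    blockSet N S T ∩ orbit N y =
      if orbit N y ∈ S then T (orbit N y) else orbit N y \ T (orbit N y) := by
  ext x
  by_cases hx : x ∈ orbit N y
  · have hxy : orbit N x = orbit N y := orbit_eq_iff.mpr hx
    split_ifs with hS <;> simp [blockSet, hxy, hx, hS]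
  · have hxT : x ∉ T (orbit N y) := fun h ↦ hx (hT y h)
    split_ifs <;> simp [hx, hxT]

theorem smul_orbit_mem_iff_of_smul_blockSet [Finite X] [N.Normal] {b d : ℕ} (hb : Odd b)
    (hT : ∀ y, T (orbit N y) ⊆ orbit N y) (hTcard : ∀ y, (T (orbit N y)).ncard = d)
    (horbit : ∀ y : X, (orbit N y).ncard = b) {g : G} (hg : g • blockSet N S T = blockSet N S T)
    (y : X) : orbit N (g • y) ∈ S ↔ orbit N y ∈ S := by
  have hcard :
      (blockSet N S T ∩ orbit N (g • y : X)).ncard = (blockSet N S T ∩ orbit N y).ncard := by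
    rw [← smul_orbit_eq_orbit_smul]
    nth_rw 1 [← hg]
    rw [← Set.smul_set_inter, Set.ncard_smul_set]
  have hdb : d ≤ b := hTcard y ▸ horbit y ▸ Set.ncard_le_ncard (hT y)
  rw [blockSet_inter_orbit hT, blockSet_inter_orbit hT] at hcard
  obtain ⟨k, rfl⟩ := hb
  split_ifs at hcard <;> simp only [Set.ncard_sdiff (hT _), hTcard, horbit] at hcard <;> grind

theorem smul_eq_of_smul_blockSet (hT : ∀ y, T (orbit N y) ⊆ orbit N y) {g : G}
    (hg : g • blockSet N S T = blockSet N S T) {y : X} (hy : g • orbit N y = orbit N y) :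
    g • T (orbit N y) = T (orbit N y) := by
  have hinter : g • (blockSet N S T ∩ orbit N y) = blockSet N S T ∩ orbit N y := by
    rw [Set.smul_set_inter, hg, hy]
  have := blockSet_inter_orbit (S := S) hT y
  split_ifs at this
  · rwa [← this]
  · rw [← Set.sdiff_sdiff_cancel_left (hT y), ← this, Set.smul_set_sdiff, hy, hinter]

theorem isDistinguishing_blockSet [Finite X] [N.Normal] {x₀ : X}
    (hodd : Odd (orbit N x₀).ncard) (hSsub : S ⊆ Set.range (fun y : X ↦ orbit N y))
    (hS : IsDistinguishingOn G (Set.range (fun y : X ↦ orbit N y)) S) {D : Set X}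
    (hDsub : D ⊆ orbit N x₀) (hD : IsDistinguishingOn G (orbit N x₀) D) {t : Set X → G}
    (ht : ∀ y, t (orbit N y) • orbit N x₀ = orbit N y) :
    IsDistinguishing G (blockSet N S fun β ↦ t β • D) := by
  intro g hg x
  have hT : ∀ y, t (orbit N y) • D ⊆ orbit N y :=
    fun y ↦ (Set.smul_set_mono hDsub).trans_eq (ht y)
  have horbit : ∀ y, (orbit N y).ncard = (orbit N x₀).ncard :=
    fun y ↦ ht y ▸ Set.ncard_smul_set _ _
  have hsub : ∀ g : G, g • blockSet N S (fun β ↦ t β • D) = blockSet N S (fun β ↦ t β • D) →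
      g • S ⊆ S := by
    rintro g hg _ ⟨β, hβ, rfl⟩
    obtain ⟨y, rfl⟩ := hSsub hβ
    change g • orbit N y ∈ S
    rw [smul_orbit_eq_orbit_smul]
    exact (smul_orbit_mem_iff_of_smul_blockSet hodd hT (fun _ ↦ Set.ncard_smul_set _ _) horbit
      hg y).mpr hβ
  have hgS : g • S = S := (hsub g hg).antisymm
    (Set.subset_smul_set_iff.mpr (hsub g⁻¹ (inv_smul_eq_iff.mpr hg.symm)))
  have hblock : g • orbit N x = orbit N x :=
    hS g (smul_range_eq_of_forall_smul (fun g y ↦ (smul_orbit_eq_orbit_smul N y g).symm) g)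
      hgS _ ⟨x, rfl⟩
  exact (hD.smul (t (orbit N x))) g (by rw [ht, hblock])
    (by rw [smul_eq_of_smul_blockSet hT hg hblock]) x (by rw [ht]; exact mem_orbit_self x)

end Blocks

section Regular

variable {G X : Type*} [Group G] [MulAction G X] [FaithfulSMul G X] (N : Subgroup G)
  [IsMulCommutative N] [IsPretransitive N X]

theorem eq_one_of_smul_eq_of_isMulCommutative {n : N} {x : X} (h : n • x = x) : n = 1 := by
  refine Subtype.ext (eq_of_smul_eq_smul (α := X) fun y ↦ ?_)
  obtain ⟨m, rfl⟩ := exists_smul_eq N x y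
  change n • m • x = (1 : N) • m • x
  rw [smul_smul, mul_comm', mul_smul, h, one_smul]

noncomputable def regularEquiv (x₀ : X) : N ≃ X :=
  Equiv.ofBijective (fun n : N ↦ n • x₀)
    ⟨fun n m h ↦ (inv_mul_eq_one.mp (eq_one_of_smul_eq_of_isMulCommutative N (x := x₀)
        (by simp only at h; rw [mul_smul, h, inv_smul_smul]))).symm,
      fun y ↦ exists_smul_eq N x₀ y⟩

variable {N} {x₀ : X}

theorem regularEquiv_apply (n : N) : regularEquiv N x₀ n = n • x₀ := rfl

theorem smul_regularEquiv_of_mem_stabilizer [N.Normal] {h : G} (hh : h ∈ stabilizer G x₀)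
    (n : N) : h • regularEquiv N x₀ n = regularEquiv N x₀ (MulAut.conjNormal h n) := by
  have hinv : h⁻¹ • x₀ = x₀ := inv_smul_eq_iff.mpr (mem_stabilizer_iff.mp hh).symm
  simp only [regularEquiv_apply, Subgroup.smul_def, MulAut.conjNormal_apply, mul_smul, hinv]

variable (N x₀) in
noncomputable def invPair (x : X) : Set X :=
  {x, regularEquiv N x₀ ((regularEquiv N x₀).symm x)⁻¹}

theorem invPair_regularEquiv (n : N) :
    invPair N x₀ (regularEquiv N x₀ n) = {regularEquiv N x₀ n, regularEquiv N x₀ n⁻¹} := by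
  rw [invPair, Equiv.symm_apply_apply]

theorem invPair_regularEquiv_inv (n : N) :
    invPair N x₀ (regularEquiv N x₀ n⁻¹) = invPair N x₀ (regularEquiv N x₀ n) := by
  rw [invPair_regularEquiv, invPair_regularEquiv, inv_inv, Set.pair_comm]

theorem invPair_smul_of_mem_stabilizer [N.Normal] {h : G} (hh : h ∈ stabilizer G x₀) (x : X) :
    invPair N x₀ (h • x) = h • invPair N x₀ x := by
  obtain ⟨n, rfl⟩ := (regularEquiv N x₀).surjective x
  rw [smul_regularEquiv_of_mem_stabilizer hh, invPair_regularEquiv, invPair_regularEquiv,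
    Set.smul_set_insert, Set.smul_set_singleton, smul_regularEquiv_of_mem_stabilizer hh,
    smul_regularEquiv_of_mem_stabilizer hh, map_inv (MulAut.conjNormal h) n]

theorem invPair_eq_singleton_iff {x : X} : invPair N x₀ x = {x₀} ↔ x = x₀ := by
  obtain ⟨n, rfl⟩ := (regularEquiv N x₀).surjective x
  rw [invPair_regularEquiv]
  refine ⟨fun h ↦ Set.mem_singleton_iff.mp (h.subset (Set.mem_insert _ _)), fun h ↦ ?_⟩
  obtain rfl : n = 1 := eq_one_of_smul_eq_of_isMulCommutative N h
  rw [inv_one, Set.pair_eq_singleton, h]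

theorem ncard_range_invPair_lt [Finite X] (hodd : Odd (Nat.card N)) (hN : N ≠ ⊥) :
    (Set.range (invPair N x₀)).ncard < Nat.card X := by
  obtain ⟨a, ha⟩ := Subgroup.ne_bot_iff_exists_ne_one.mp hN
  refine Set.ncard_range_lt_of_not_injective fun hinj ↦ ha (eq_one_of_mul_self_eq_one hodd ?_)
  have := (regularEquiv N x₀).injective (hinj (invPair_regularEquiv_inv a))
  simpa only [this] using inv_mul_cancel a

theorem exists_preimage_invPair_not_dvd_ncard [Finite X] [N.Normal] {p : ℕ} (hp : p.Prime)
    {S : Set (Set X)} (hS : S ⊆ Set.range (invPair N x₀)) :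
    ∃ T ⊆ Set.range (invPair N x₀), (∀ h ∈ stabilizer G x₀, h • T = T → h • S = S) ∧
      ¬ p ∣ (invPair N x₀ ⁻¹' T).ncard := by
  rcases Set.not_dvd_ncard_or_not_dvd_ncard_symmDiff_singleton hp (invPair N x₀ ⁻¹' S) x₀
    with h | h
  · exact ⟨S, hS, fun _ _ ↦ id, h⟩
  refine ⟨symmDiff S {{x₀}}, Set.symmDiff_subset_union.trans (Set.union_subset hS ?_),
    fun h hh hT ↦ ?_, ?_⟩
  · exact Set.singleton_subset_iff.mpr ⟨x₀, invPair_eq_singleton_iff.mpr rfl⟩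
  · have hx₀ : h • ({{x₀}} : Set (Set X)) = {{x₀}} := by
      rw [Set.smul_set_singleton, Set.smul_set_singleton, mem_stabilizer_iff.mp hh]
    rwa [Set.smul_set_symmDiff, hx₀, symmDiff_left_inj] at hT
  · have : invPair N x₀ ⁻¹' {{x₀}} = {x₀} := Set.ext fun _ ↦ invPair_eq_singleton_iff
    rwa [Set.preimage_symmDiff, this]

open scoped IsMulCommutative in
theorem mem_stabilizer_of_smul_eq [Finite X] [N.Normal] (hodd : Odd (Nat.card N)) {p : ℕ}
    (hp : p.Prime) (hpN : ∀ a : N, a ^ p = 1) {Δ : Set X}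
    (hΔinv : ∀ n : N, regularEquiv N x₀ n ∈ Δ → regularEquiv N x₀ n⁻¹ ∈ Δ)
    (hΔp : ¬ p ∣ Δ.ncard) {g : G} (hg : g • Δ = Δ) : g ∈ stabilizer G x₀ := by
  classical
  have := Fintype.ofFinite X
  set e := regularEquiv N x₀
  set v := e.symm (g • x₀)
  have hh : (v : G)⁻¹ * g ∈ stabilizer G x₀ := by
    rw [mem_stabilizer_iff, mul_smul, ← e.apply_symm_apply (g • x₀), regularEquiv_apply,
      Subgroup.smul_def, inv_smul_smul]
  have hmaps : ∀ n, g • e n = e (v * MulAut.conjNormal ((v : G)⁻¹ * g) n) := fun n ↦ by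
    calc g • e n = (v : G) • ((v : G)⁻¹ * g) • e n := by rw [smul_smul, mul_inv_cancel_left]
      _ = e (v * MulAut.conjNormal ((v : G)⁻¹ * g) n) := by
        rw [smul_regularEquiv_of_mem_stabilizer hh]
        exact (mul_smul v _ x₀).symm
  let s := Δ.toFinset.map e.symm.toEmbedding
  have hmem : ∀ n, n ∈ s ↔ e n ∈ Δ := fun n ↦ by simp [s]
  have hprod : ∏ n ∈ s, n = 1 :=
    Finset.prod_eq_one_of_inv_mem hodd fun n hn ↦ (hmem _).mpr (hΔinv n ((hmem n).mp hn))
  have hpow : v ^ s.card = 1 := pow_card_eq_one_of_mapsTo _ v hprod fun n hn ↦ (hmem _).mpr <| by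
    rw [← hmaps, ← hg]
    exact Set.smul_mem_smul_set ((hmem n).mp hn)
  have hcop : s.card.Coprime p := by
    rw [Finset.card_map, ← Set.ncard_eq_toFinset_card', Nat.coprime_comm]
    exact (Nat.Prime.coprime_iff_not_dvd hp).mpr hΔp
  have hv : v = 1 := by simpa [hcop] using pow_gcd_eq_one.mpr ⟨hpow, hpN v⟩
  simpa [hv] using hh

theorem eq_one_of_forall_conjNormal_eq [N.Normal] {h : G} (hh : h ∈ stabilizer G x₀)
    (hc : ∀ n : N, MulAut.conjNormal h n = n) : h = 1 :=
  eq_of_smul_eq_smul (α := X) fun y ↦ by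
    obtain ⟨n, rfl⟩ := (regularEquiv N x₀).surjective y
    rw [smul_regularEquiv_of_mem_stabilizer hh, hc, one_smul]

open scoped IsMulCommutative in
theorem eq_one_of_forall_smul_invPair_eq [N.Normal] (hodd : Odd (Nat.card G)) {h : G}
    (hh : h ∈ stabilizer G x₀) (hfix : ∀ x, h • invPair N x₀ x = invPair N x₀ x) : h = 1 := by
  have hc : ∀ n : N, MulAut.conjNormal h n = n ∨ MulAut.conjNormal h n = n⁻¹ := by
    intro n
    have hmem : h • regularEquiv N x₀ n ∈ invPair N x₀ (regularEquiv N x₀ n) := by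
      rw [← hfix]
      exact Set.smul_mem_smul_set (Set.mem_insert _ _)
    rw [smul_regularEquiv_of_mem_stabilizer hh, invPair_regularEquiv] at hmem
    simpa only [Set.mem_insert_iff, Set.mem_singleton_iff, (regularEquiv N x₀).injective.eq_iff]
      using hmem
  rcases MonoidHom.forall_eq_or_forall_eq_inv (M := N) (MulAut.conjNormal h : N ≃* N).toMonoidHom
    hc with hid | hinv
  · exact eq_one_of_forall_conjNormal_eq (N := N) hh hid
  · refine eq_one_of_mul_self_eq_one hodd
      (eq_one_of_forall_conjNormal_eq (N := N) (mul_mem hh hh) fun n ↦ ?_)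
    simp only [MulEquiv.coe_toMonoidHom] at hinv
    rw [map_mul, MulAut.mul_apply, hinv, hinv, inv_inv]

end Regular

section Induction

def DistinguishingBelow (n : ℕ) : Prop :=
  ∀ (G X : Type) [Group G] [Finite G] [Group.IsSolvable G] [Finite X] [MulAction G X],
    Odd (Nat.card G) → Nat.card X < n → ∃ Δ : Set X, IsDistinguishing G Δ

variable {G X : Type} [Group G] [MulAction G X]

def setStabilizerSubMulAction (s : Set X) : SubMulAction (stabilizer G s) X where
  carrier := s
  smul_mem' g x hx := by
    have := Set.smul_mem_smul_set (a := (g : G)) hx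
    rwa [mem_stabilizer_iff.mp g.2] at this

theorem exists_subset_isDistinguishingOn [Finite G] [Group.IsSolvable G] [Finite X] {n : ℕ}
    (hbelow : DistinguishingBelow n) (hodd : Odd (Nat.card G)) (s : Set X) (hs : s.ncard < n) :
    ∃ Δ ⊆ s, IsDistinguishingOn G s Δ := by
  obtain ⟨D, hD⟩ := hbelow (stabilizer G s) (setStabilizerSubMulAction (G := G) s)
    (hodd.of_dvd_nat (Subgroup.card_subgroup_dvd_card _)) ((Nat.card_coe_set_eq s).trans_lt hs)
  refine ⟨Subtype.val '' D, by rintro _ ⟨x, -, rfl⟩; exact x.2, fun g hgs hgD x hx ↦ ?_⟩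
  let k : stabilizer G s := ⟨g, hgs⟩
  have hkD : k • D = D := by
    refine Set.image_injective.mpr Subtype.val_injective ?_
    rw [Set.image_smul_comm Subtype.val k D fun _ ↦ rfl]
    exact hgD
  exact congrArg Subtype.val (hD k hkD ⟨x, hx⟩)

variable [Finite G] [Group.IsSolvable G] [Finite X]

theorem exists_isDistinguishing_of_not_isPretransitive
    (hbelow : DistinguishingBelow (Nat.card X)) (hodd : Odd (Nat.card G))
    (htrans : ¬ IsPretransitive G X) : ∃ Δ : Set X, IsDistinguishing G Δ := by
  obtain ⟨x, y, hxy⟩ : ∃ x y : X, y ∉ orbit G x := by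
    by_contra! h
    exact htrans ⟨fun x y ↦ h x y⟩
  obtain ⟨Δ₁, h₁, hΔ₁⟩ := exists_subset_isDistinguishingOn hbelow hodd (orbit G x)
    (Set.ncard_lt_card fun h ↦ hxy (h ▸ Set.mem_univ y))
  obtain ⟨Δ₂, h₂, hΔ₂⟩ := exists_subset_isDistinguishingOn hbelow hodd (orbit G x)ᶜ
    (Set.ncard_lt_card fun h ↦ (h ▸ Set.mem_univ x : x ∈ (orbit G x)ᶜ) (mem_orbit_self x))
  exact ⟨_, isDistinguishing_union (fun g ↦ smul_orbit g x) h₁ h₂ hΔ₁ hΔ₂⟩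

theorem exists_isDistinguishing_of_not_isPretransitive_normal [IsPretransitive G X]
    (hbelow : DistinguishingBelow (Nat.card X)) (hodd : Odd (Nat.card G))
    (N : Subgroup G) [N.Normal] (hN : ¬ IsPretransitive N X) {a : G} (ha : a ∈ N) {y : X}
    (hay : a • y ≠ y) : ∃ Δ : Set X, IsDistinguishing G Δ := by
  obtain ⟨S, hSsub, hS⟩ := exists_subset_isDistinguishingOn hbelow hodd _
    (Set.ncard_range_lt_of_not_injective fun hinj ↦ hay (hinj (orbit_smul (⟨a, ha⟩ : N) y)))
  obtain ⟨D, hDsub, hD⟩ := exists_subset_isDistinguishingOn hbelow hodd (orbit N y)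
    (Set.ncard_lt_card fun h ↦ hN ((isPretransitive_iff_orbit_eq_univ y).mpr h))
  have hoddy : Odd (orbit N y).ncard := hodd.of_dvd_nat <| index_stabilizer N y ▸
    (Subgroup.index_dvd_card _).trans (Subgroup.card_subgroup_dvd_card N)
  have htransversal : ∀ β : Set X, ∃ g : G, ∀ z, orbit N z = β → g • orbit N y = β := by
    intro β
    by_cases hβ : ∃ z, orbit N z = β
    · obtain ⟨z, rfl⟩ := hβ
      obtain ⟨g, rfl⟩ := exists_smul_eq G y z
      exact ⟨g, fun _ _ ↦ smul_orbit_eq_orbit_smul N y g⟩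
    · exact ⟨1, fun z hz ↦ absurd ⟨z, hz⟩ hβ⟩
  choose t ht using htransversal
  exact ⟨_, isDistinguishing_blockSet hoddy hSsub hS hDsub hD fun z ↦ ht _ z rfl⟩

theorem exists_isDistinguishing_of_isPretransitive_normal_abelian [FaithfulSMul G X] [Nonempty X]
    (hbelow : DistinguishingBelow (Nat.card X)) (hodd : Odd (Nat.card G)) (N : Subgroup G)
    [N.Normal] [IsMulCommutative N] [IsPretransitive N X] (hN : N ≠ ⊥) {p : ℕ} (hp : p.Prime)
    (hpN : ∀ a : N, a ^ p = 1) : ∃ Δ : Set X, IsDistinguishing G Δ := by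
  obtain ⟨x₀⟩ : Nonempty X := inferInstance
  have hoddN : Odd (Nat.card N) := hodd.of_dvd_nat (Subgroup.card_subgroup_dvd_card N)
  have hequiv : ∀ (h : stabilizer G x₀) x, invPair N x₀ (h • x) = h • invPair N x₀ x :=
    fun h x ↦ invPair_smul_of_mem_stabilizer h.2 x
  obtain ⟨S, hSsub, hS⟩ := exists_subset_isDistinguishingOn (G := stabilizer G x₀) hbelow
    (hodd.of_dvd_nat (Subgroup.card_subgroup_dvd_card _)) _ (ncard_range_invPair_lt hoddN hN)
  obtain ⟨T, hTsub, hTS, hTp⟩ := exists_preimage_invPair_not_dvd_ncard hp hSsub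
  refine ⟨invPair N x₀ ⁻¹' T, fun g hg ↦ ?_⟩
  have hg₀ : g ∈ stabilizer G x₀ := mem_stabilizer_of_smul_eq hoddN hp hpN
    (fun n hn ↦ by rwa [Set.mem_preimage, invPair_regularEquiv_inv]) hTp hg
  let h : stabilizer G x₀ := ⟨g, hg₀⟩
  have hT : h • T = T := by
    refine (Set.preimage_eq_preimage' ((Set.smul_set_mono hTsub).trans
      (smul_range_eq_of_forall_smul hequiv h).subset) hTsub).mp ?_
    rw [preimage_smul_set_of_forall_smul hequiv]
    exact hg
  have hfix := hS h (smul_range_eq_of_forall_smul hequiv h) (hTS g hg₀ hT)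
  have : g = 1 := eq_one_of_forall_smul_invPair_eq hodd hg₀ fun x ↦ hfix _ ⟨x, rfl⟩
  intro x
  rw [this, one_smul]

theorem exists_isDistinguishing_of_faithful [FaithfulSMul G X]
    (hbelow : DistinguishingBelow (Nat.card X)) (hodd : Odd (Nat.card G)) :
    ∃ Δ : Set X, IsDistinguishing G Δ := by
  rcases subsingleton_or_nontrivial X with hX | hX
  · exact ⟨∅, fun _ _ _ ↦ Subsingleton.elim _ _⟩
  by_cases htrans : IsPretransitive G X
  swap
  · exact exists_isDistinguishing_of_not_isPretransitive hbelow hodd htrans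
  obtain ⟨x₀, y₀, hxy⟩ := exists_pair_ne X
  have : Nontrivial G := by
    obtain ⟨g, hg⟩ := exists_smul_eq G x₀ y₀
    exact ⟨g, 1, by rintro rfl; exact hxy (by rwa [one_smul] at hg)⟩
  obtain ⟨A, hAn, hAc, hA⟩ := Subgroup.exists_normal_isMulCommutative_ne_bot (G := G)
  have hp := Nat.minFac_prime fun h ↦ hA (Subgroup.card_eq_one.mp h)
  have := Fact.mk hp
  have hN := A.kerPow_ne_bot _ (Nat.minFac_dvd (Nat.card A))
  by_cases hNtrans : IsPretransitive (A.kerPow (Nat.card A).minFac) X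
  · exact exists_isDistinguishing_of_isPretransitive_normal_abelian hbelow hodd _ hN hp
      (A.pow_eq_one_of_mem_kerPow _)
  obtain ⟨a, ha⟩ := Subgroup.ne_bot_iff_exists_ne_one.mp hN
  obtain ⟨y, hy⟩ : ∃ y : X, (a : G) • y ≠ y := by
    by_contra! h
    exact ha (Subtype.ext (eq_of_smul_eq_smul (α := X) fun y ↦ by
      rw [h y, OneMemClass.coe_one, one_smul]))
  exact exists_isDistinguishing_of_not_isPretransitive_normal hbelow hodd _ hNtrans a.2 hy

end Induction

theorem exists_isDistinguishing (G X : Type) [Group G] [Finite G] [Group.IsSolvable G]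
    [Finite X] [MulAction G X] (hodd : Odd (Nat.card G)) : ∃ Δ : Set X, IsDistinguishing G Δ := by
  induction hn : Nat.card X using Nat.strong_induction_on generalizing G X with
  | _ n ih =>
    have hbelow : DistinguishingBelow (Nat.card X) :=
      fun G' X' _ _ _ _ _ hodd' hlt ↦ ih _ (hn ▸ hlt) G' X' hodd' rfl
    have := Group.isSolvable_of_surjective (toPermHom G X).rangeRestrict_surjective
    obtain ⟨Δ, hΔ⟩ := exists_isDistinguishing_of_faithful (G := (toPermHom G X).range) hbelow
      (hodd.of_dvd_nat (Subgroup.card_range_dvd _))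
    exact ⟨Δ, hΔ.of_toPermHom_range⟩

end MulAction

/-- Let `H` be a finite solvable group of odd order acting faithfully on a
finite nonempty set `Ω`. Then there is a nonempty subset `Δ ⊆ Ω` with
`π(H) = π(|H : H_Δ|)`, where `H_Δ` is the setwise stabilizer of `Δ`. -/
theorem exists_subset_stabilizer_index_odd (H Ω : Type) [Group H] [Finite H]
    [Group.IsSolvable H] [Finite Ω] [Nonempty Ω] [MulAction H Ω]
    (hfaith : ∀ g : H, (∀ x : Ω, g • x = x) → g = 1)
    (hodd : Odd (Nat.card H)) :
    ∃ Δ : Set Ω, Δ.Nonempty ∧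
      (Nat.card H).primeFactors = ((MulAction.stabilizer H Δ).index).primeFactors := by
  obtain ⟨Δ, hΔ⟩ := MulAction.exists_isDistinguishing H Ω hodd
  obtain ⟨Δ, hne, hΔ⟩ : ∃ Δ : Set Ω, Δ.Nonempty ∧ MulAction.IsDistinguishing H Δ := by
    rcases Δ.eq_empty_or_nonempty with rfl | hne
    · exact ⟨Set.univ, Set.univ_nonempty, by simpa using hΔ.compl⟩
    · exact ⟨Δ, hne, hΔ⟩
  refine ⟨Δ, hne, ?_⟩
  rw [(Subgroup.eq_bot_iff_forall (MulAction.stabilizer H Δ)).mpr fun g hg ↦ hfaith g (hΔ g hg),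
    Subgroup.index_bot]
end
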